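/- Let f : 𝕆 → 𝕆 be left para-linear with second associator [p,x,f] := f(px) − p f(x). Then Re(f([p,q,x])) = Re([p,x,f]·q) for all p, q, x ∈ 𝕆, where [p,q,x] = (pq)x − p(qx). In particular Re([p,x,f]·q) = −Re([q,x,f]·p). -/

import Mathlib

noncomputable section

open Quaternion

/-- The octonions, as the Cayley–Dickson double of the quaternions. -/
def Octo : Type := ℍ × ℍ

namespace Octo

instance : AddCommGroup Octo := inferInstanceAs (AddCommGroup (ℍ × ℍ))
instance : Module ℝ Octo := inferInstanceAs (Module ℝ (ℍ × ℍ))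

/-- Cayley–Dickson multiplication: (a,b)(c,d) = (ac − d̄b, da + bc̄). -/
instance : Mul Octo :=
  ⟨fun x y => ((x.1 * y.1 - star y.2 * x.2, y.2 * x.1 + x.2 * star y.1) : ℍ × ℍ)⟩

/-- Octonionic conjugation. -/
def conj (x : Octo) : Octo := ((star x.1, -x.2) : ℍ × ℍ)

/-- Real part. -/
def re (x : Octo) : ℝ := x.1.re

/-- Squared norm. -/
def normSq (x : Octo) : ℝ := re (x * conj x)

/-- The standard basis e₀ = 1, e₁, …, e₇. -/
def e : Fin 8 → Octo :=
  ![((1, 0) : ℍ × ℍ), ((⟨0,1,0,0⟩, 0) : ℍ × ℍ), ((⟨0,0,1,0⟩, 0) : ℍ × ℍ),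
    ((⟨0,0,0,1⟩, 0) : ℍ × ℍ), ((0, 1) : ℍ × ℍ), ((0, ⟨0,1,0,0⟩) : ℍ × ℍ),
    ((0, ⟨0,0,1,0⟩) : ℍ × ℍ), ((0, ⟨0,0,0,1⟩) : ℍ × ℍ)]

/-- Inverse: p⁻¹ = conj p / |p|². -/
def inv (x : Octo) : Octo := (normSq x)⁻¹ • conj x

/-- The associator [a,b,c] = (ab)c − a(bc). -/
def assoc (a b c : Octo) : Octo := a * b * c - a * (b * c)

/-- Left para-linear map: ℝ-linear with Re(f(px) − p f(x)) = 0. -/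
def IsParaLinear (f : Octo → Octo) : Prop :=
  IsLinearMap ℝ f ∧ ∀ p x : Octo, re (f (p * x) - p * f x) = 0

end Octo

/-!
Para-linearity says `Re f(px) = Re(p f(x))`. Together with `Re(ab) = Re(ba)` and
`Re((ab)c) = Re(a(bc))` this turns `Re([p,x,f] q)` into `Re f(q(px)) − Re f((qp)x)`, that is
`−Re f([q,p,x])`. Since the octonions are alternative, the associator changes sign when its first
two arguments are swapped, which gives both identities.
-/

namespace Octo

@[simp] lemma fst_sub (a b : Octo) : (a - b).1 = a.1 - b.1 := rfl
@[simp] lemma snd_sub (a b : Octo) : (a - b).2 = a.2 - b.2 := rfl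
@[simp] lemma fst_neg (a : Octo) : (-a).1 = -a.1 := rfl
@[simp] lemma snd_neg (a : Octo) : (-a).2 = -a.2 := rfl
@[simp] lemma fst_mul (a b : Octo) : (a * b).1 = a.1 * b.1 - star b.2 * a.2 := rfl
@[simp] lemma snd_mul (a b : Octo) : (a * b).2 = b.2 * a.1 + a.2 * star b.1 := rfl

lemma re_sub (a b : Octo) : re (a - b) = re a - re b := Quaternion.re_sub _ _
lemma re_neg (a : Octo) : re (-a) = -re a := Quaternion.re_neg _

lemma re_mul_comm (a b : Octo) : re (a * b) = re (b * a) := by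
  simp only [re, fst_mul, Quaternion.re_sub, Quaternion.re_mul, Quaternion.re_star,
    Quaternion.imI_star, Quaternion.imJ_star, Quaternion.imK_star]
  ring

lemma re_mul_assoc (a b c : Octo) : re (a * b * c) = re (a * (b * c)) := by
  simp [re, Quaternion.re_mul]
  ring

lemma sub_mul (a b c : Octo) : (a - b) * c = a * c - b * c := by
  refine Prod.ext ?_ ?_ <;> simp only [fst_mul, snd_mul, fst_sub, snd_sub] <;> noncomm_ring

lemma assoc_swap (p q x : Octo) : assoc q p x = -assoc p q x := by
  refine Prod.ext ?_ ?_ <;>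
    simp only [assoc, fst_mul, snd_mul, fst_neg, snd_neg, fst_sub, snd_sub] <;>
  · ext <;>
      simp only [star_sub, star_mul, star_star, Quaternion.re_add, Quaternion.imI_add,
        Quaternion.imJ_add, Quaternion.imK_add, Quaternion.re_sub, Quaternion.imI_sub,
        Quaternion.imJ_sub, Quaternion.imK_sub, Quaternion.re_neg, Quaternion.imI_neg,
        Quaternion.imJ_neg, Quaternion.imK_neg, Quaternion.re_mul, Quaternion.imI_mul,
        Quaternion.imJ_mul, Quaternion.imK_mul, Quaternion.re_star, Quaternion.imI_star,
        Quaternion.imJ_star, Quaternion.imK_star] <;>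
      ring

-- The paper's second associator `[p,x,f]`.
def secondAssoc (f : Octo → Octo) (p x : Octo) : Octo := f (p * x) - p * f x

namespace IsParaLinear

variable {f : Octo → Octo}

lemma re_map_mul (hf : IsParaLinear f) (p x : Octo) : re (f (p * x)) = re (p * f x) := by
  simpa only [re_sub, sub_eq_zero] using hf.2 p x

lemma re_secondAssoc_mul (hf : IsParaLinear f) (p q x : Octo) :
    re (secondAssoc f p x * q) = -re (f (assoc q p x)) :=
  calc re (secondAssoc f p x * q) = re (q * f (p * x)) - re (q * (p * f x)) := by
        rw [secondAssoc, sub_mul, re_sub, re_mul_comm (f _), re_mul_comm (p * f x)]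
    _ = re (f (q * (p * x))) - re (f (q * p * x)) := by
        rw [← re_mul_assoc, hf.re_map_mul, hf.re_map_mul]
    _ = -re (f (assoc q p x)) := by
        rw [assoc, hf.1.map_sub, re_sub, neg_sub]

end IsParaLinear

end Octo

theorem stmt14 (f : Octo → Octo) (hf : Octo.IsParaLinear f) (p q x : Octo) :
    Octo.re (f (Octo.assoc p q x)) = Octo.re ((f (p * x) - p * f x) * q) ∧
      Octo.re ((f (p * x) - p * f x) * q) = - Octo.re ((f (q * x) - q * f x) * p) := by
  have hswap : Octo.re (f (Octo.assoc q p x)) = -Octo.re (f (Octo.assoc p q x)) := by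
    rw [Octo.assoc_swap, hf.1.map_neg, Octo.re_neg]
  change _ = Octo.re (Octo.secondAssoc f p x * q) ∧
    Octo.re (Octo.secondAssoc f p x * q) = -Octo.re (Octo.secondAssoc f q x * p)
  rw [hf.re_secondAssoc_mul, hf.re_secondAssoc_mul, hswap, neg_neg]
  exact ⟨rfl, rfl⟩
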